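/- Let ν ≥ 2 be an integer, let j ∈ ℕ satisfy 2^j ≥ 2ν, let m ∈ {2^j − ν, …, 2^j − 1}, set k := 2^j − 1 − m ∈ {0, …, ν−1}, and let φ_k^right ∈ L²(ℝ) vanish almost everywhere outside [−k−ν, 0]. Define the right boundary function φ^bd_{j,m} : [0,1] → ℝ by φ^bd_{j,m}(x) = 2^{j/2} φ_k^right(2^j (x − 1)). Then for every n ∈ ℕ: ∫₀¹ φ^bd_{j,m}(x) w_n(x) dx = Σ_{l=m−2^j−ν+1}^{−1} 2^{−j/2} w_n((l + 2^j)/2^j) · ∫₀¹ φ_k^right(x+l) w_{⌊n/2^j⌋}(x) dx. -/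

import Mathlib

open MeasureTheory

/-- `natDigit n i` is the `i`-th binary digit `n^(i)` (for `i ≥ 1`) of `n ∈ ℕ`,
so that `n = Σ_{i ≥ 1} n^(i) 2^(i-1)`. -/
def natDigit (n i : ℕ) : ℕ := (n / 2 ^ (i - 1)) % 2

/-- `dyadicDigit x i` is the `i`-th dyadic digit `x^(i) = ⌊2^i x⌋ − 2⌊2^(i−1) x⌋`
(for `i ≥ 1`) of `x ∈ [0,1)`. -/
noncomputable def dyadicDigit (x : ℝ) (i : ℕ) : ℤ :=
  ⌊(2 : ℝ) ^ i * x⌋ - 2 * ⌊(2 : ℝ) ^ (i - 1) * x⌋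

/-- The sequency-ordered Walsh function
`w_n(x) = (−1)^{Σ_{i≥1} (n^(i) + n^(i+1)) x^(i)}`; the sum is finite since
`n^(i) = 0` for `i > n`, so it may be truncated at `i = n + 1`. -/
noncomputable def walsh (n : ℕ) (x : ℝ) : ℝ :=
  (-1 : ℝ) ^ ∑ i ∈ Finset.Icc 1 (n + 1),
    (natDigit n i + natDigit n (i + 1)) * (dyadicDigit x i).toNat

/-- The dyadic XOR `x ⊕ y := Σ_{i≥1} |x^(i) − y^(i)| 2^{−i}` of `x, y ∈ [0,1)`. -/
noncomputable def dyadicXor (x y : ℝ) : ℝ :=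
  ∑' i : ℕ, |(dyadicDigit x (i + 1) : ℝ) - (dyadicDigit y (i + 1) : ℝ)| / 2 ^ (i + 1)

/-!
For an integer `p` and `0 ≤ x < 1`, the first `j` dyadic digits of `(p + x) / 2 ^ j` are those of
`p / 2 ^ j` and the following ones are those of `x`; as `w_n` depends on its argument only
through these digits, this gives `w_n ((p + x) / 2 ^ j) = w_n (p / 2 ^ j) * w_{⌊n / 2 ^ j⌋} x`.
Cutting `[0, 1]` into the `2 ^ j` dyadic intervals of length `2 ^ (-j)` and rescaling each of
them to `[0, 1]` turns the Walsh coefficient of `φ^bd_{j,m}` into a sum over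
`l = p - 2 ^ j ∈ [-2 ^ j, -1]` of Walsh coefficients of the translates `φ_k^right (· + l)`;
the support condition kills the terms with `l < -k - ν`.
-/

theorem natDigit_eq_zero_of_lt {n i : ℕ} (h : n < i) : natDigit n i = 0 := by
  have : n < 2 ^ (i - 1) := by have := Nat.lt_two_pow_self (n := i - 1); omega
  simp [natDigit, Nat.div_eq_of_lt this]

theorem natDigit_div_two_pow (n j : ℕ) {i : ℕ} (hi : 1 ≤ i) :
    natDigit (n / 2 ^ j) i = natDigit n (j + i) := by
  rw [natDigit, natDigit, Nat.div_div_eq_div_mul, ← pow_add, Nat.add_sub_assoc hi]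

theorem dyadicDigit_add_intCast (y : ℝ) (m : ℤ) {i : ℕ} (hi : 1 ≤ i) :
    dyadicDigit (y + m) i = dyadicDigit y i := by
  obtain ⟨i, rfl⟩ := Nat.exists_eq_add_of_le' hi
  have h : (2 : ℝ) ^ (i + 1) * m = ((2 * 2 ^ i * m : ℤ) : ℝ) := by push_cast; ring
  have h' : (2 : ℝ) ^ i * m = ((2 ^ i * m : ℤ) : ℝ) := by push_cast; ring
  simp only [dyadicDigit, Nat.add_sub_cancel, mul_add, h, h', Int.floor_add_intCast]
  ring

theorem dyadicDigit_intCast (m : ℤ) {i : ℕ} (hi : 1 ≤ i) : dyadicDigit m i = 0 := by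
  simpa [dyadicDigit] using dyadicDigit_add_intCast 0 m hi

theorem dyadicDigit_div_two_pow (y : ℝ) (j : ℕ) {i : ℕ} (hi : 1 ≤ i) :
    dyadicDigit (y / 2 ^ j) (j + i) = dyadicDigit y i := by
  have key : ∀ t, (2 : ℝ) ^ (j + t) * (y / 2 ^ j) = 2 ^ t * y := fun t => by
    rw [pow_add]; field_simp
  rw [dyadicDigit, dyadicDigit, Nat.add_sub_assoc hi, key, key]

theorem Int.floor_intCast_add_div_natCast (p : ℤ) {x : ℝ} (hx0 : 0 ≤ x) (hx1 : x < 1) (N : ℕ) :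
    ⌊((p : ℝ) + x) / N⌋ = ⌊(p : ℝ) / N⌋ := by
  have hp : ⌊(p : ℝ) + x⌋ = p := by
    rw [Int.floor_intCast_add, Int.floor_eq_zero_iff.mpr ⟨hx0, hx1⟩, add_zero]
  rw [Int.floor_div_natCast, Int.floor_div_natCast, hp, Int.floor_intCast]

theorem dyadicDigit_intCast_add_div_two_pow (p : ℤ) {x : ℝ} (hx0 : 0 ≤ x) (hx1 : x < 1)
    {i j : ℕ} (hij : i ≤ j) :
    dyadicDigit ((p + x) / 2 ^ j) i = dyadicDigit (p / 2 ^ j) i := by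
  have key : ∀ y : ℝ, ∀ t ≤ j, (2 : ℝ) ^ t * (y / 2 ^ j) = y / 2 ^ (j - t) := fun y t ht => by
    rw [← Nat.sub_add_cancel ht, pow_add, Nat.add_sub_cancel]; field_simp
  have hfloor : ∀ s : ℕ, ⌊((p : ℝ) + x) / 2 ^ s⌋ = ⌊(p : ℝ) / 2 ^ s⌋ := fun s => by
    exact_mod_cast Int.floor_intCast_add_div_natCast p hx0 hx1 (2 ^ s)
  simp only [dyadicDigit, key _ i hij, key _ (i - 1) (by omega), hfloor]

-- Indexed from `0`: `walshTerm n y i` is the summand of index `i + 1` in the exponent of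
-- `walsh n y`.
noncomputable def walshTerm (n : ℕ) (y : ℝ) (i : ℕ) : ℕ :=
  (natDigit n (i + 1) + natDigit n (i + 2)) * (dyadicDigit y (i + 1)).toNat

theorem walsh_eq_neg_one_pow_sum_range {n N : ℕ} (hN : n + 1 ≤ N) (y : ℝ) :
    walsh n y = (-1) ^ ∑ i ∈ Finset.range N, walshTerm n y i := by
  have hvanish : ∀ i ∈ Finset.range N, i ∉ Finset.range (n + 1) → walshTerm n y i = 0 := by
    intro i _ hi
    rw [Finset.mem_range, not_lt] at hi
    simp [walshTerm, natDigit_eq_zero_of_lt (show n < i + 1 by omega),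
      natDigit_eq_zero_of_lt (show n < i + 2 by omega)]
  rw [← Finset.sum_subset (Finset.range_subset_range.mpr hN) hvanish, walsh,
    ← Finset.Ico_add_one_right_eq_Icc, Finset.range_eq_Ico]
  exact congrArg _ (Finset.sum_Ico_add' _ 0 (n + 1) 1).symm

theorem walshTerm_div_two_pow (n j : ℕ) (y : ℝ) (i : ℕ) :
    walshTerm n (y / 2 ^ j) (j + i) = walshTerm (n / 2 ^ j) y i := by
  simp only [walshTerm, natDigit_div_two_pow n j (Nat.le_add_left 1 i),
    natDigit_div_two_pow n j (Nat.le_add_left 1 (i + 1)),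
    ← dyadicDigit_div_two_pow y j (Nat.le_add_left 1 i)]
  rfl

theorem walsh_intCast_add_div_two_pow (n j : ℕ) (p : ℤ) {x : ℝ} (hx0 : 0 ≤ x) (hx1 : x < 1) :
    walsh n ((p + x) / 2 ^ j) = walsh n (p / 2 ^ j) * walsh (n / 2 ^ j) x := by
  have hN : n + 1 ≤ j + (n + 1) := Nat.le_add_left _ _
  have hN' : n / 2 ^ j + 1 ≤ n + 1 := Nat.succ_le_succ (Nat.div_le_self _ _)
  rw [walsh_eq_neg_one_pow_sum_range hN, walsh_eq_neg_one_pow_sum_range hN,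
    walsh_eq_neg_one_pow_sum_range hN' x, Finset.sum_range_add _ j, Finset.sum_range_add _ j,
    ← pow_add]
  congr 1
  have hlow : ∀ i ∈ Finset.range j, walshTerm n ((p + x) / 2 ^ j) i = walshTerm n (p / 2 ^ j) i :=
    fun i hi => by
      rw [walshTerm, walshTerm, dyadicDigit_intCast_add_div_two_pow p hx0 hx1
        (Finset.mem_range.mp hi)]
  have hhigh : ∀ i ∈ Finset.range (n + 1),
      walshTerm n ((p + x) / 2 ^ j) (j + i) = walshTerm (n / 2 ^ j) x i := fun i _ => by
    rw [walshTerm_div_two_pow, walshTerm, walshTerm, add_comm (p : ℝ),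
      dyadicDigit_add_intCast x p (Nat.le_add_left 1 i)]
  have hzero : ∀ i ∈ Finset.range (n + 1), walshTerm n (p / 2 ^ j) (j + i) = 0 := fun i _ => by
    rw [walshTerm_div_two_pow, walshTerm, dyadicDigit_intCast p (Nat.le_add_left 1 i)]
    simp
  rw [Finset.sum_congr rfl hlow, Finset.sum_congr rfl hhigh, Finset.sum_eq_zero hzero, add_zero]

theorem measurable_walsh (n : ℕ) : Measurable (walsh n) := by
  have hdigit : ∀ i, Measurable fun x : ℝ => dyadicDigit x i := fun i =>
    (Int.measurable_floor.comp (measurable_const_mul _)).sub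
      ((Int.measurable_floor.comp (measurable_const_mul _)).const_mul 2)
  refine (measurable_from_top (f := fun e : ℕ => (-1 : ℝ) ^ e)).comp
    (Finset.measurable_sum _ fun i _ => ?_)
  exact ((measurable_from_top (f := Int.toNat)).comp (hdigit i)).const_mul _

theorem abs_walsh (n : ℕ) (x : ℝ) : |walsh n x| = 1 := by
  rw [walsh, abs_pow, abs_neg, abs_one, one_pow]

theorem IntervalIntegrable.mul_walsh {f : ℝ → ℝ} {a b : ℝ} (hf : IntervalIntegrable f volume a b)
    (n : ℕ) : IntervalIntegrable (fun x => f x * walsh n x) volume a b := by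
  rw [intervalIntegrable_iff] at hf ⊢
  exact hf.mul_bdd (measurable_walsh n).aestronglyMeasurable
    (Filter.Eventually.of_forall fun x => (abs_walsh n x).le)

theorem integral_dyadicInterval_mul_walsh (f : ℝ → ℝ) (n j : ℕ) (p : ℤ) :
    ∫ x in (p / 2 ^ j : ℝ)..(p + 1) / 2 ^ j, f x * walsh n x =
      (2 ^ j)⁻¹ * walsh n (p / 2 ^ j) *
        ∫ x in (0 : ℝ)..1, f ((p + x) / 2 ^ j) * walsh (n / 2 ^ j) x := by
  have hc : (2 : ℝ) ^ j ≠ 0 := by positivity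
  have hshift : ∀ x : ℝ, x / 2 ^ j + p / 2 ^ j = (p + x) / 2 ^ j := fun x => by ring
  have hcov := intervalIntegral.integral_comp_div_add (fun x => f x * walsh n x) hc (p / 2 ^ j)
    (a := 0) (b := 1)
  simp only [hshift, add_zero, smul_eq_mul] at hcov
  have hfactor : ∀ᵐ x, x ∈ Set.uIoc (0 : ℝ) 1 → f ((p + x) / 2 ^ j) * walsh n ((p + x) / 2 ^ j) =
      walsh n (p / 2 ^ j) * (f ((p + x) / 2 ^ j) * walsh (n / 2 ^ j) x) := by
    filter_upwards [volume.ae_ne 1] with x hx1 hx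
    rw [Set.uIoc_of_le zero_le_one] at hx
    rw [walsh_intCast_add_div_two_pow n j p hx.1.le (lt_of_le_of_ne hx.2 hx1)]
    ring
  rw [mul_assoc, ← intervalIntegral.integral_const_mul,
    ← intervalIntegral.integral_congr_ae hfactor, hcov, inv_mul_cancel_left₀ hc]

theorem integral_mul_walsh_eq_sum_range {f : ℝ → ℝ} (hf : IntervalIntegrable f volume 0 1)
    (n j : ℕ) :
    ∫ x in (0 : ℝ)..1, f x * walsh n x =
      ∑ p ∈ Finset.range (2 ^ j), (2 ^ j)⁻¹ * walsh n (p / 2 ^ j) *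
        ∫ x in (0 : ℝ)..1, f ((p + x) / 2 ^ j) * walsh (n / 2 ^ j) x := by
  set a : ℕ → ℝ := fun p => p / 2 ^ j
  have hsub : ∀ p < 2 ^ j,
      IntervalIntegrable (fun x => f x * walsh n x) volume (a p) (a (p + 1)) := by
    intro p hp
    have h0 : 0 ≤ a p := by positivity
    have hmono : a p ≤ a (p + 1) := by simp only [a]; gcongr; simp
    have h1 : a (p + 1) ≤ 1 := by
      simp only [a]; rw [div_le_one (by positivity)]; exact_mod_cast hp
    exact (hf.mul_walsh n).mono_set (Set.uIcc_subset_uIcc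
      (Set.mem_uIcc_of_le h0 (hmono.trans h1)) (Set.mem_uIcc_of_le (h0.trans hmono) h1))
  have hends : a 0 = 0 ∧ a (2 ^ j) = 1 := by simp [a]
  rw [← hends.1, ← hends.2, ← intervalIntegral.sum_integral_adjacent_intervals hsub]
  refine Finset.sum_congr rfl fun p _ => ?_
  simpa [a] using integral_dyadicInterval_mul_walsh f n j p

theorem integral_comp_add_mul_eq_zero {φ g : ℝ → ℝ} {a l : ℝ} (hφ : ∀ᵐ y, y < a → φ y = 0)
    (hl : l + 1 ≤ a) : ∫ x in (0 : ℝ)..1, φ (x + l) * g x = 0 := by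
  apply intervalIntegral.integral_zero_ae
  filter_upwards [(measurePreserving_add_right volume l).quasiMeasurePreserving.ae hφ,
    volume.ae_ne 1] with x hx hx1 hmem
  rw [Set.uIoc_of_le zero_le_one] at hmem
  rw [hx (by linarith [lt_of_le_of_ne hmem.2 hx1]), zero_mul]

theorem integral_comp_two_pow_mul_sub_one_mul_walsh {φ : ℝ → ℝ} {j : ℕ}
    (hφ : IntervalIntegrable φ volume (-2 ^ j) 0) (n : ℕ) :
    ∫ x in (0 : ℝ)..1, ((2 : ℝ) ^ ((j : ℝ) / 2) * φ (2 ^ j * (x - 1))) * walsh n x =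
      ∑ l ∈ Finset.Ico (-2 ^ j : ℤ) 0,
        (2 : ℝ) ^ (-(j : ℝ) / 2) * walsh n (((l : ℝ) + 2 ^ j) / 2 ^ j) *
          ∫ x in (0 : ℝ)..1, φ (x + l) * walsh (n / 2 ^ j) x := by
  have hc : (2 : ℝ) ^ j ≠ 0 := by positivity
  have hf : IntervalIntegrable
      (fun x => (2 : ℝ) ^ ((j : ℝ) / 2) * φ (2 ^ j * (x - 1))) volume 0 1 := by
    have := (hφ.comp_mul_left (c := 2 ^ j)).comp_sub_right 1
    simp only [neg_div, div_self hc, zero_div, neg_add_cancel, zero_add] at this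
    exact this.const_mul _
  have hscale : (2 : ℝ) ^ ((j : ℝ) / 2) * (2 ^ j)⁻¹ = 2 ^ (-(j : ℝ) / 2) := by
    rw [← Real.rpow_natCast, ← Real.rpow_neg_one, ← Real.rpow_mul zero_le_two,
      ← Real.rpow_add zero_lt_two]
    ring_nf
  have hidx : (0 - -2 ^ j : ℤ).toNat = 2 ^ j := by simpa using Int.toNat_natCast (2 ^ j)
  rw [integral_mul_walsh_eq_sum_range hf, Int.Ico_eq_finset_map, Finset.sum_map, hidx]
  refine Finset.sum_congr rfl fun p _ => ?_
  have harg : ∀ x : ℝ, 2 ^ j * ((p + x) / 2 ^ j - 1) = x + ((-2 ^ j + p : ℤ) : ℝ) := fun x => by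
    push_cast; field_simp; ring
  have hl : ((-2 ^ j + p : ℤ) : ℝ) + 2 ^ j = p := by push_cast; ring
  simp only [Function.Embedding.trans_apply, Nat.castEmbedding_apply, addLeftEmbedding_apply, hl,
    harg, mul_assoc, intervalIntegral.integral_const_mul, ← hscale]
  ring

theorem walsh_boundary_right_edge_general (ν : ℕ) (j : ℕ) (hj : 2 * ν ≤ 2 ^ j)
    (m : ℕ) (hm1 : 2 ^ j ≤ m + ν) (hm2 : m < 2 ^ j) (k : ℕ) (hk : k = 2 ^ j - 1 - m)
    (φright : ℝ → ℝ) (hL2 : MemLp φright 2 volume)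
    (hsupp : ∀ᵐ x : ℝ, x ∉ Set.Icc (-(k : ℝ) - ν) 0 → φright x = 0) (n : ℕ) :
    ∫ x in (0 : ℝ)..1,
        ((2 : ℝ) ^ ((j : ℝ) / 2) * φright (2 ^ j * (x - 1))) * walsh n x =
      ∑ l ∈ Finset.Icc ((m : ℤ) - 2 ^ j - ν + 1) (-1 : ℤ),
        (2 : ℝ) ^ (-(j : ℝ) / 2) * walsh n (((l : ℝ) + 2 ^ j) / 2 ^ j) *
          ∫ x in (0 : ℝ)..1, φright (x + l) * walsh (n / 2 ^ j) x := by
  have hφ : IntervalIntegrable φright volume (-2 ^ j) 0 :=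
    ((hL2.locallyIntegrable one_le_two).integrableOn_isCompact isCompact_uIcc).intervalIntegrable
  have hleft : ∀ᵐ y : ℝ, y < -(k : ℝ) - ν → φright y = 0 := by
    filter_upwards [hsupp] with y hy hlt
    exact hy fun hmem => hlt.not_ge hmem.1
  have hpow : ((2 ^ j : ℕ) : ℤ) = 2 ^ j := by norm_cast
  rw [integral_comp_two_pow_mul_sub_one_mul_walsh hφ]
  refine (Finset.sum_subset (fun l hl => ?_) fun l hl hl' => ?_).symm
  · simp only [Finset.mem_Icc, Finset.mem_Ico] at hl ⊢
    omega
  · simp only [Finset.mem_Icc, Finset.mem_Ico] at hl hl'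
    have hlk : (l : ℝ) + 1 ≤ -(k : ℝ) - ν := by exact_mod_cast (by omega : l + 1 ≤ -(k : ℤ) - ν)
    rw [integral_comp_add_mul_eq_zero hleft hlk, mul_zero]

/-- Right boundary scaling functions: for `ν ≥ 2`, `2^j ≥ 2ν`,
`2^j − ν ≤ m ≤ 2^j − 1`, `k := 2^j − 1 − m`, and `φ_k^right ∈ L²(ℝ)` supported in
`[−k−ν, 0]`, the Walsh coefficients of `φ^bd_{j,m}(x) = 2^{j/2} φ_k^right(2^j(x−1))`
on `[0,1]` satisfy, for every `n ∈ ℕ`: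
`∫₀¹ φ^bd_{j,m}(x) w_n(x) dx
  = Σ_{l=m−2^j−ν+1}^{−1} 2^{−j/2} w_n((l+2^j)/2^j) ∫₀¹ φ_k^right(x+l) w_{⌊n/2^j⌋}(x) dx`. -/
theorem walsh_boundary_right_edge (ν : ℕ) (hν : 2 ≤ ν) (j : ℕ) (hj : 2 * ν ≤ 2 ^ j)
    (m : ℕ) (hm1 : 2 ^ j ≤ m + ν) (hm2 : m < 2 ^ j) (k : ℕ) (hk : k = 2 ^ j - 1 - m)
    (φright : ℝ → ℝ) (hL2 : MemLp φright 2 volume)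
    (hsupp : ∀ᵐ x : ℝ, x ∉ Set.Icc (-(k : ℝ) - ν) 0 → φright x = 0) (n : ℕ) :
    ∫ x in (0 : ℝ)..1,
        ((2 : ℝ) ^ ((j : ℝ) / 2) * φright (2 ^ j * (x - 1))) * walsh n x =
      ∑ l ∈ Finset.Icc ((m : ℤ) - 2 ^ j - ν + 1) (-1 : ℤ),
        (2 : ℝ) ^ (-(j : ℝ) / 2) * walsh n (((l : ℝ) + 2 ^ j) / 2 ^ j) *
          ∫ x in (0 : ℝ)..1, φright (x + l) * walsh (n / 2 ^ j) x :=
  walsh_boundary_right_edge_general ν j hj m hm1 hm2 k hk φright hL2 hsupp n
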